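/- There exist constants c > 0, C > 0 and an integer n₀ such that for all n ≥ n₀ the area (2-dimensional Lebesgue measure) of the region X₂ satisfies c·n ≤ Area(X₂) ≤ C·n; equivalently, 2·∫_{0.9·n^{4/7}}^{n^{4/7}−1} 0.5·(n^{4/7} − r)^{−1/4} · r dr = Θ(n). -/

import Mathlib

open MeasureTheory

/-- The region `X₂`, given in polar coordinates `(r, θ)`, `θ ∈ (-π, π]`, by
`0.9·n^{4/7} < r < n^{4/7} - 1` and `min(|θ|, |θ - π|) < 0.5·(n^{4/7} - r)^{-1/4}`,
with the plane modeled by `ℂ` (so `r = |z|` and `θ = arg z`). -/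
noncomputable def X2 (n : ℕ) : Set ℂ :=
  {z : ℂ |
    0.9 * (n : ℝ) ^ ((4 : ℝ) / 7) < ‖z‖ ∧
    ‖z‖ < (n : ℝ) ^ ((4 : ℝ) / 7) - 1 ∧
    min |z.arg| |z.arg - Real.pi| <
      0.5 * ((n : ℝ) ^ ((4 : ℝ) / 7) - ‖z‖) ^ ((-1 : ℝ) / 4)}

/-!
In polar coordinates the area element is `r dr dθ`. Write `R = n^{4/7}` and
`g(r) = 0.5·(R - r)^{-1/4}`. For `0.9·R < r < R - 1` the angular slice of `X₂` is made of an
arc of length `2·g(r)` around `θ = 0` and, because `arg` takes values in `(-π, π]`, an arc of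
length `g(r)` just below `θ = π`; so `Area(X₂) = 3·∫ g(r)·r dr`. Since `r ∈ [0.9·R, R]`, that
integral is comparable to `R·∫ (R - r)^{-1/4} dr = (4/3)·R·((0.1·R)^{3/4} - 1) ≍ R^{7/4} = n`.
-/

open Set Real intervalIntegral

theorem integral_sub_rpow {s : ℝ} (hs : -1 < s) (R a b : ℝ) :
    ∫ r in a..b, (R - r) ^ s = ((R - a) ^ (s + 1) - (R - b) ^ (s + 1)) / (s + 1) := by
  rw [integral_comp_sub_left (fun x => x ^ s), integral_rpow (Or.inl hs)]

theorem continuousOn_sub_rpow_Icc {R a b : ℝ} (hb : b < R) (s : ℝ) :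
    ContinuousOn (fun r => (R - r) ^ s) (Icc a b) :=
  (continuousOn_const.sub continuousOn_id).rpow_const fun _ hr =>
    Or.inl (sub_pos.2 (hr.2.trans_lt hb)).ne'

section WeightedIntegral

variable {w : ℝ → ℝ} {a b : ℝ}

theorem mul_integral_le_integral_mul_id (hab : a ≤ b) (hw : IntervalIntegrable w volume a b)
    (hw0 : ∀ r ∈ Icc a b, 0 ≤ w r) : a * ∫ r in a..b, w r ≤ ∫ r in a..b, w r * r := by
  rw [← intervalIntegral.integral_const_mul]
  exact integral_mono_on hab (hw.const_mul a) (hw.mul_continuousOn continuousOn_id)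
    fun r hr => by nlinarith [hw0 r hr, hr.1]

theorem integral_mul_id_le_mul_integral (hab : a ≤ b) (hw : IntervalIntegrable w volume a b)
    (hw0 : ∀ r ∈ Icc a b, 0 ≤ w r) : ∫ r in a..b, w r * r ≤ b * ∫ r in a..b, w r := by
  rw [← intervalIntegral.integral_const_mul]
  exact integral_mono_on hab (hw.mul_continuousOn continuousOn_id) (hw.const_mul b)
    fun r hr => by nlinarith [hw0 r hr, hr.2]

end WeightedIntegral

theorem rpow_three_quarters_bounds {R : ℝ} (hR : 160 ≤ R) :
    8 ≤ (0.1 * R) ^ ((3 : ℝ) / 4) ∧ 0.1 * R ^ ((3 : ℝ) / 4) ≤ (0.1 * R) ^ ((3 : ℝ) / 4) ∧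
      (0.1 * R) ^ ((3 : ℝ) / 4) ≤ R ^ ((3 : ℝ) / 4) := by
  refine ⟨?_, ?_, rpow_le_rpow (by linarith) (by linarith) (by norm_num)⟩
  · calc (8 : ℝ) = ((2 : ℝ) ^ (4 : ℝ)) ^ ((3 : ℝ) / 4) := by
          rw [← rpow_mul (by norm_num)]; norm_num
      _ ≤ (0.1 * R) ^ ((3 : ℝ) / 4) := rpow_le_rpow (by positivity) (by norm_num; linarith)
          (by norm_num)
  · rw [mul_rpow (by norm_num) (by linarith)]
    have h : (0.1 : ℝ) ≤ 0.1 ^ ((3 : ℝ) / 4) := by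
      simpa using rpow_le_rpow_of_exponent_ge (x := (0.1 : ℝ)) (by norm_num) (by norm_num)
        (show (3 : ℝ) / 4 ≤ 1 by norm_num)
    exact mul_le_mul_of_nonneg_right h (rpow_nonneg (by linarith) _)

theorem integral_X2_radial_bounds {R : ℝ} (hR : 160 ≤ R) :
    0.03 * R ^ ((7 : ℝ) / 4) ≤
        ∫ r in (0.9 * R)..(R - 1), 0.5 * (R - r) ^ ((-1 : ℝ) / 4) * r ∧
      ∫ r in (0.9 * R)..(R - 1), 0.5 * (R - r) ^ ((-1 : ℝ) / 4) * r ≤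
        2 / 3 * R ^ ((7 : ℝ) / 4) := by
  have hab : 0.9 * R ≤ R - 1 := by linarith
  have hw : IntervalIntegrable (fun r => 0.5 * (R - r) ^ ((-1 : ℝ) / 4)) volume
      (0.9 * R) (R - 1) :=
    ((continuousOn_sub_rpow_Icc (by linarith) _).const_smul (0.5 : ℝ)).intervalIntegrable_of_Icc
      hab
  have hw0 : ∀ r ∈ Icc (0.9 * R) (R - 1), 0 ≤ 0.5 * (R - r) ^ ((-1 : ℝ) / 4) :=
    fun r hr => mul_nonneg (by norm_num) (rpow_nonneg (by linarith [hr.2]) _)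
  obtain ⟨hS8, hSlow, hSupp⟩ := rpow_three_quarters_bounds hR
  set S := (0.1 * R) ^ ((3 : ℝ) / 4)
  have hint : ∫ r in (0.9 * R)..(R - 1), 0.5 * (R - r) ^ ((-1 : ℝ) / 4) = 2 / 3 * (S - 1) := by
    rw [intervalIntegral.integral_const_mul, integral_sub_rpow (by norm_num),
      show R - 0.9 * R = 0.1 * R by ring, sub_sub_cancel, one_rpow,
      show (-1 : ℝ) / 4 + 1 = 3 / 4 by norm_num]
    ring
  have hlow := mul_integral_le_integral_mul_id hab hw hw0
  have hupp := integral_mul_id_le_mul_integral hab hw hw0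
  rw [hint] at hlow hupp
  have hR74 : R ^ ((7 : ℝ) / 4) = R * R ^ ((3 : ℝ) / 4) := by
    rw [← rpow_one_add' (by linarith) (by norm_num)]; norm_num
  rw [hR74]
  constructor
  · nlinarith [mul_le_mul_of_nonneg_left (show 0.05 * R ^ ((3 : ℝ) / 4) ≤ S - 1 by linarith)
      (show 0 ≤ 0.9 * R * (2 / 3) by linarith)]
  · nlinarith [mul_le_mul (show R - 1 ≤ R by linarith)
      (show S - 1 ≤ R ^ ((3 : ℝ) / 4) by linarith) (by linarith) (by linarith)]

theorem volume_preimage_complexPolarCoord {s : Set (ℝ × ℝ)} (hs : MeasurableSet s) :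
    volume (Complex.polarCoord ⁻¹' s) =
      ∫⁻ r in Ioi 0, ENNReal.ofReal r * volume (Prod.mk r ⁻¹' s ∩ Ioo (-π) π) := by
  have hmeas : MeasurableSet (Complex.polarCoord ⁻¹' s) := by
    have : (Complex.polarCoord : ℂ → ℝ × ℝ) = fun z => (‖z‖, z.arg) :=
      funext Complex.polarCoord_apply
    rw [this]
    exact (continuous_norm.measurable.prodMk Complex.measurable_arg) hs
  have hpolar : ∀ p ∈ polarCoord.target, ENNReal.ofReal p.1 •
      (Complex.polarCoord ⁻¹' s).indicator 1 (Complex.polarCoord.symm p) =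
        ENNReal.ofReal p.1 * s.indicator 1 p := by
    intro p hp
    change _ * s.indicator (1 : ℝ × ℝ → ENNReal)
      (Complex.polarCoord (Complex.polarCoord.symm p)) = _
    rw [Complex.polarCoord.right_inv hp]
  rw [← lintegral_indicator_one hmeas, ← Complex.lintegral_comp_polarCoord_symm,
    setLIntegral_congr_fun polarCoord.open_target.measurableSet hpolar, polarCoord_target,
    Measure.volume_eq_prod, setLIntegral_prod (fun p => ENNReal.ofReal p.1 * s.indicator 1 p)
      ((measurable_fst.ennreal_ofReal.mul (measurable_one.indicator hs)).aemeasurable)]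
  refine setLIntegral_congr_fun measurableSet_Ioi fun r _ => ?_
  have hslice : MeasurableSet (Prod.mk r ⁻¹' s) := measurable_prodMk_left hs
  change ∫⁻ θ in Ioo (-π) π, ENNReal.ofReal r * (Prod.mk r ⁻¹' s).indicator 1 θ = _
  rw [lintegral_const_mul _ (measurable_one.indicator hslice), lintegral_indicator_one hslice,
    Measure.restrict_apply hslice]

theorem volume_min_abs_lt_inter_Ioo {g : ℝ} (hg0 : 0 ≤ g) (hg : g ≤ π / 2) :
    volume ({θ : ℝ | min |θ| |θ - π| < g} ∩ Ioo (-π) π) = ENNReal.ofReal (3 * g) := by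
  have hπ := pi_pos
  have hset : {θ : ℝ | min |θ| |θ - π| < g} ∩ Ioo (-π) π = Ioo (-g) g ∪ Ioo (π - g) π := by
    ext θ
    simp only [mem_inter_iff, mem_ofPred_eq, min_lt_iff, abs_lt, mem_Ioo, mem_union]
    constructor
    · rintro ⟨h | h, -, hθ⟩
      exacts [Or.inl h, Or.inr ⟨by linarith [h.1], hθ⟩]
    · rintro (h | h)
      exacts [⟨Or.inl h, by linarith [h.1], by linarith [h.2]⟩,
        ⟨Or.inr ⟨by linarith [h.1], by linarith [h.2]⟩, by linarith [h.1], h.2⟩]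
  have hdisj : Disjoint (Ioo (-g) g) (Ioo (π - g) π) :=
    Ioo_disjoint_Ioo.2 (min_le_of_left_le (le_max_of_le_right (by linarith)))
  rw [hset, measure_union hdisj measurableSet_Ioo, Real.volume_Ioo, Real.volume_Ioo,
    ← ENNReal.ofReal_add (by linarith) (by linarith)]
  congr 1
  ring

def polarX2 (R : ℝ) : Set (ℝ × ℝ) :=
  {p | 0.9 * R < p.1 ∧ p.1 < R - 1 ∧ min |p.2| |p.2 - π| < 0.5 * (R - p.1) ^ ((-1 : ℝ) / 4)}

theorem X2_eq_preimage_polarCoord (n : ℕ) :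
    X2 n = Complex.polarCoord ⁻¹' polarX2 ((n : ℝ) ^ ((4 : ℝ) / 7)) := by
  ext z
  rw [mem_preimage, Complex.polarCoord_apply]
  rfl

theorem measurableSet_polarX2 (R : ℝ) : MeasurableSet (polarX2 R) := by
  unfold polarX2
  measurability

theorem volume_slice_polarX2 (R r : ℝ) :
    volume (Prod.mk r ⁻¹' polarX2 R ∩ Ioo (-π) π) =
      (Ioo (0.9 * R) (R - 1)).indicator
        (fun r => ENNReal.ofReal (3 * (0.5 * (R - r) ^ ((-1 : ℝ) / 4)))) r := by
  by_cases hr : r ∈ Ioo (0.9 * R) (R - 1)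
  · have hslice : Prod.mk r ⁻¹' polarX2 R =
        {θ | min |θ| |θ - π| < 0.5 * (R - r) ^ ((-1 : ℝ) / 4)} := by
      ext θ
      simp [polarX2, hr.1, hr.2]
    have hw0 : 0 ≤ (R - r) ^ ((-1 : ℝ) / 4) := rpow_nonneg (by linarith [hr.2]) _
    have hw1 : (R - r) ^ ((-1 : ℝ) / 4) ≤ 1 :=
      rpow_le_one_of_one_le_of_nonpos (by linarith [hr.2]) (by norm_num)
    rw [hslice, indicator_of_mem hr,
      volume_min_abs_lt_inter_Ioo (by linarith) (by linarith [pi_gt_three])]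
  · have hslice : Prod.mk r ⁻¹' polarX2 R = ∅ :=
      eq_empty_of_forall_notMem fun θ hθ => hr ⟨hθ.1, hθ.2.1⟩
    rw [hslice, indicator_of_notMem hr, empty_inter, measure_empty]

theorem volume_preimage_polarCoord_polarX2 {R : ℝ} (hR : 10 ≤ R) :
    volume (Complex.polarCoord ⁻¹' polarX2 R) = ENNReal.ofReal
      (3 * ∫ r in (0.9 * R)..(R - 1), 0.5 * (R - r) ^ ((-1 : ℝ) / 4) * r) := by
  set f : ℝ → ℝ := fun r => 3 * (0.5 * (R - r) ^ ((-1 : ℝ) / 4) * r)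
  have hab : 0.9 * R ≤ R - 1 := by linarith
  have hf_cont : ContinuousOn f (Icc (0.9 * R) (R - 1)) :=
    continuousOn_const.mul ((continuousOn_const.mul
      (continuousOn_sub_rpow_Icc (by linarith) _)).mul continuousOn_id)
  have hpos : Ioo (0.9 * R) (R - 1) ⊆ Ioi 0 :=
    fun r hr => (show (0 : ℝ) < 0.9 * R by linarith).trans hr.1
  have hf_nonneg : ∀ r ∈ Ioo (0.9 * R) (R - 1), 0 ≤ f r := fun r hr => by
    have := rpow_nonneg (show 0 ≤ R - r by linarith [hr.2]) ((-1 : ℝ) / 4)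
    have : 0 < r := hpos hr
    positivity
  rw [volume_preimage_complexPolarCoord (measurableSet_polarX2 R)]
  simp_rw [volume_slice_polarX2, ← indicator_mul_right]
  rw [setLIntegral_indicator measurableSet_Ioo, inter_eq_left.2 hpos,
    ← intervalIntegral.integral_const_mul, integral_of_le hab, integral_Ioc_eq_integral_Ioo,
    ofReal_integral_eq_lintegral_ofReal]
  · refine setLIntegral_congr_fun measurableSet_Ioo fun r hr => ?_
    rw [← ENNReal.ofReal_mul (hpos hr).le]
    congr 1
    ring
  · exact hf_cont.integrableOn_Icc.mono_set Ioo_subset_Icc_self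
  · exact (ae_restrict_iff' measurableSet_Ioo).2 (ae_of_all _ hf_nonneg)

/-- The area of `X₂` is `Θ(n)`; equivalently,
`2·∫_{0.9·n^{4/7}}^{n^{4/7} - 1} 0.5·(n^{4/7} - r)^{-1/4}·r dr = Θ(n)`. -/
theorem area_X2_theta_n :
    ∃ c C : ℝ, 0 < c ∧ 0 < C ∧ ∃ n₀ : ℕ, ∀ n : ℕ, n₀ ≤ n →
      (ENNReal.ofReal (c * (n : ℝ)) ≤ volume (X2 n) ∧
        volume (X2 n) ≤ ENNReal.ofReal (C * (n : ℝ))) ∧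
      (c * (n : ℝ) ≤
          2 * ∫ r in (0.9 * (n : ℝ) ^ ((4 : ℝ) / 7))..((n : ℝ) ^ ((4 : ℝ) / 7) - 1),
            0.5 * ((n : ℝ) ^ ((4 : ℝ) / 7) - r) ^ ((-1 : ℝ) / 4) * r ∧
        2 * ∫ r in (0.9 * (n : ℝ) ^ ((4 : ℝ) / 7))..((n : ℝ) ^ ((4 : ℝ) / 7) - 1),
            0.5 * ((n : ℝ) ^ ((4 : ℝ) / 7) - r) ^ ((-1 : ℝ) / 4) * r ≤
          C * (n : ℝ)) := by
  refine ⟨0.06, 2, by norm_num, by norm_num, ⌈(160 : ℝ) ^ ((7 : ℝ) / 4)⌉₊, fun n hn => ?_⟩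
  set R := (n : ℝ) ^ ((4 : ℝ) / 7)
  have hR : 160 ≤ R :=
    calc (160 : ℝ) = ((160 : ℝ) ^ ((7 : ℝ) / 4)) ^ ((4 : ℝ) / 7) := by
          rw [← rpow_mul (by norm_num)]; norm_num
      _ ≤ R := rpow_le_rpow (by positivity) (Nat.ceil_le.1 hn) (by norm_num)
  have hRn : R ^ ((7 : ℝ) / 4) = n := by
    rw [← rpow_mul n.cast_nonneg]; norm_num
  obtain ⟨hlow, hupp⟩ := integral_X2_radial_bounds hR
  rw [hRn] at hlow hupp
  rw [X2_eq_preimage_polarCoord, volume_preimage_polarCoord_polarX2 (by linarith)]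
  exact ⟨⟨ENNReal.ofReal_le_ofReal (by linarith), ENNReal.ofReal_le_ofReal (by linarith)⟩,
    by linarith, by linarith⟩
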